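/- Let ξ = ((m_1,n_1),…,(m_z,n_z)) be a Newton polygon with m_r ≥ 1 and n_r ≥ 1 for all r, and let 1 ≤ r < q ≤ z. Then in the linear order of S(ξ): (i) (r,1) < (q,1); (ii) (r, m_r+n_r) < (q, m_q+n_q); (iii) (r, m_r+1) < (q, m_q+1). -/

import Mathlib

open scoped Classical

noncomputable section

/-- Symbols `(r, i)` (1-indexed component `r`, 1-indexed position `i`). -/
abbrev Symb : Type := ℕ × ℕ

/-- A Newton polygon: a finite list of coprime pairs `(m_r, n_r)` with `m_r + n_r > 0`
and weakly decreasing slopes `n_r / (m_r + n_r)`. -/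
structure NewtonPolygon where
  seg : List (ℕ × ℕ)
  coprime : ∀ p ∈ seg, Nat.Coprime p.1 p.2
  pos : ∀ p ∈ seg, 0 < p.1 + p.2
  slopes : ∀ r q : Fin seg.length, r ≤ q →
    ((seg.get q).2 : ℚ) / (((seg.get q).1 : ℚ) + ((seg.get q).2 : ℚ)) ≤
      ((seg.get r).2 : ℚ) / (((seg.get r).1 : ℚ) + ((seg.get r).2 : ℚ))

namespace NewtonPolygon

/-- The number `z` of segments. -/
def z (ξ : NewtonPolygon) : ℕ := ξ.seg.length

/-- `m_r` (1-indexed). -/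
def m (ξ : NewtonPolygon) (r : ℕ) : ℕ := (ξ.seg.getD (r - 1) (0, 0)).1

/-- `n_r` (1-indexed). -/
def n (ξ : NewtonPolygon) (r : ℕ) : ℕ := (ξ.seg.getD (r - 1) (0, 0)).2

/-- `h_r = m_r + n_r`. -/
def h (ξ : NewtonPolygon) (r : ℕ) : ℕ := ξ.m r + ξ.n r

/-- Membership in the symbol set `T(ξ) = {(r,i) : 1 ≤ r ≤ z, 1 ≤ i ≤ h_r}`. -/
def mem (ξ : NewtonPolygon) (t : Symb) : Prop :=
  1 ≤ t.1 ∧ t.1 ≤ ξ.z ∧ 1 ≤ t.2 ∧ t.2 ≤ ξ.h t.1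

/-- The symbol set `T(ξ)` as a finset. -/
def Tfin (ξ : NewtonPolygon) : Finset Symb :=
  ((Finset.Icc 1 ξ.z) ×ˢ (Finset.Icc 1 (ξ.seg.foldr (fun p s => p.1 + p.2 + s) 0))).filter
    (fun t => t.2 ≤ ξ.h t.1)

/-- The map `δ : T(ξ) → {0,1}`; `δ(r,i) = 1` iff `i ≤ m_r`. -/
def dlt (ξ : NewtonPolygon) (t : Symb) : ℕ := if t.2 ≤ ξ.m t.1 then 1 else 0

/-- The bijection `π(r, i) = (r, ((i - m_r - 1) mod h_r) + 1)`. -/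
def pmap (ξ : NewtonPolygon) (t : Symb) : Symb :=
  (t.1, (((t.2 : ℤ) - (ξ.m t.1 : ℤ) - 1) % ((ξ.h t.1 : ℤ))).toNat + 1)

/-- The inverse of `π`: `π⁻¹(r, i) = (r, ((i + m_r - 1) mod h_r) + 1)`. -/
def pinv (ξ : NewtonPolygon) (t : Symb) : Symb :=
  (t.1, (((t.2 : ℤ) + (ξ.m t.1 : ℤ) - 1) % ((ξ.h t.1 : ℤ))).toNat + 1)

/-- Binary expansion `b(t) = ∑_{k ≥ 1} δ(π^{-k}(t)) · 2^{-k}`. -/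
def bexp (ξ : NewtonPolygon) (t : Symb) : ℝ :=
  ∑' k : ℕ, (ξ.dlt (ξ.pinv^[k + 1] t) : ℝ) / 2 ^ (k + 1)

/-- The linear order on `T(ξ)`: `t < t'` iff `b(t) < b(t')`, or `b(t) = b(t')` and
`t` is in an earlier component. -/
def slt (ξ : NewtonPolygon) (t t' : Symb) : Prop :=
  ξ.bexp t < ξ.bexp t' ∨ (ξ.bexp t = ξ.bexp t' ∧ t.1 < t'.1)

/-- The length `ℓ(ξ)`: the number of pairs `t < t'` with `δ(t) = 0` and `δ(t') = 1`. -/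
def len (ξ : NewtonPolygon) : ℕ :=
  ((ξ.Tfin ×ˢ ξ.Tfin).filter (fun p => ξ.slt p.1 p.2 ∧ ξ.dlt p.1 = 0 ∧ ξ.dlt p.2 = 1)).card

/-- `π' = τ ∘ π`, the permutation of the small modification by `(u, v)`. -/
def pmod (ξ : NewtonPolygon) (u v : Symb) (t : Symb) : Symb := Equiv.swap u v (ξ.pmap t)

/-- The inverse of `π'`. -/
def pmodInv (ξ : NewtonPolygon) (u v : Symb) (t : Symb) : Symb := ξ.pinv (Equiv.swap u v t)

/-- `b'(t) = ∑_{k ≥ 1} δ(π'^{-k}(t)) · 2^{-k}` of the small modification by `(u, v)`. -/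
def bmod (ξ : NewtonPolygon) (u v : Symb) (t : Symb) : ℝ :=
  ∑' k : ℕ, (ξ.dlt ((ξ.pmodInv u v)^[k + 1] t) : ℝ) / 2 ^ (k + 1)

/-- The order of the small modification by `(u, v)`: the order of `S(ξ)` with the
positions of `u` and `v` exchanged. -/
def lt0 (ξ : NewtonPolygon) (u v : Symb) (t t' : Symb) : Prop :=
  ξ.slt (Equiv.swap u v t) (Equiv.swap u v t')

/-- `R` is a specialization of `S(ξ)` by `(u, v)`: a strict linear order on `T(ξ)`
such that `t ≺ t'` implies `b'(t) ≤ b'(t')`. -/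
def IsSpec (ξ : NewtonPolygon) (u v : Symb) (R : Symb → Symb → Prop) : Prop :=
  (∀ t ∈ ξ.Tfin, ¬ R t t) ∧
  (∀ t ∈ ξ.Tfin, ∀ t' ∈ ξ.Tfin, ∀ t'' ∈ ξ.Tfin, R t t' → R t' t'' → R t t'') ∧
  (∀ t ∈ ξ.Tfin, ∀ t' ∈ ξ.Tfin, t ≠ t' → R t t' ∨ R t' t) ∧
  (∀ t ∈ ξ.Tfin, ∀ t' ∈ ξ.Tfin, R t t' → ξ.bmod u v t ≤ ξ.bmod u v t')

/-- The length `ℓ(≺)` of an order `R`: the number of pairs `t ≺ t'` in `T(ξ)` with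
`δ(t) = 0` and `δ(t') = 1`. -/
def lenR (ξ : NewtonPolygon) (R : Symb → Symb → Prop) : ℕ :=
  ((ξ.Tfin ×ˢ ξ.Tfin).filter (fun p => R p.1 p.2 ∧ ξ.dlt p.1 = 0 ∧ ξ.dlt p.2 = 1)).card

/-- There exists a generic specialization of `S(ξ)` by `(u, v)`. -/
def ExGeneric (ξ : NewtonPolygon) (u v : Symb) : Prop :=
  ∃ R : Symb → Symb → Prop, ξ.IsSpec u v R ∧ (ξ.lenR R : ℤ) = (ξ.len : ℤ) - 1

/-- `α_k = π'^k(u)`. -/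
def alpha (ξ : NewtonPolygon) (u v : Symb) (k : ℕ) : Symb := (ξ.pmod u v)^[k] u

/-- `β_k = π'^k(v)`. -/
def beta (ξ : NewtonPolygon) (u v : Symb) (k : ℕ) : Symb := (ξ.pmod u v)^[k] v

/-- The set `A_k` computed with respect to an order `R`. -/
def AsetOf (ξ : NewtonPolygon) (u v : Symb) (R : Symb → Symb → Prop) (k : ℕ) : Finset Symb :=
  ξ.Tfin.filter (fun t =>
    (if k = 0 then ξ.dlt t = 0 else t.1 ≠ v.1 ∧ ξ.dlt t = ξ.dlt (ξ.alpha u v k)) ∧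
    R t (ξ.alpha u v k) ∧ R (ξ.alpha u v (k + 1)) (ξ.pmod u v t))

/-- The maximum of a finset for an order `R`. -/
def maxOf (R : Symb → Symb → Prop) (s : Finset Symb) : Symb :=
  if hmax : ∃ t, t ∈ s ∧ ∀ t' ∈ s, t' ≠ t → R t' t then hmax.choose else (0, 0)

/-- The minimum of a finset for an order `R`. -/
def minOf (R : Symb → Symb → Prop) (s : Finset Symb) : Symb :=
  if hmin : ∃ t, t ∈ s ∧ ∀ t' ∈ s, t' ≠ t → R t t' then hmin.choose else (0, 0)

/-- The pairs `(t, t')` reversed in a step of Construction A: `t = α_k` and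
`α_k <_{k-1} t' ≤_{k-1} w` where `w = π'(t_max)`. -/
def revA (R : Symb → Symb → Prop) (a w : Symb) (t t' : Symb) : Prop :=
  t = a ∧ R t t' ∧ (R t' w ∨ t' = w)

/-- One step of Construction A. -/
def stepA (R : Symb → Symb → Prop) (a w : Symb) : Symb → Symb → Prop :=
  fun t t' => (R t t' ∧ ¬ revA R a w t t') ∨ revA R a w t' t

/-- The pairs `(t, t')` reversed in a step of Construction B: `t' = β_k` and
`w ≤_{k-1} t <_{k-1} β_k` where `w = π'(t_min)`. -/
def revB (R : Symb → Symb → Prop) (b w : Symb) (t t' : Symb) : Prop :=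
  t' = b ∧ R t t' ∧ (R w t ∨ t = w)

/-- One step of Construction B. -/
def stepB (R : Symb → Symb → Prop) (b w : Symb) : Symb → Symb → Prop :=
  fun t t' => (R t t' ∧ ¬ revB R b w t t') ∨ revB R b w t' t

/-- The order `<_k` of Construction A (for `k ≥ 1`, meaningful when `A_{k-1} ≠ ∅`). -/
def ordA (ξ : NewtonPolygon) (u v : Symb) : ℕ → Symb → Symb → Prop
  | 0 => ξ.lt0 u v
  | k + 1 =>
      stepA (ordA ξ u v k) (ξ.alpha u v (k + 1))
        (ξ.pmod u v (maxOf (ordA ξ u v k) (ξ.AsetOf u v (ordA ξ u v k) k)))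

/-- The set `A_k` of Construction A. -/
def Aset (ξ : NewtonPolygon) (u v : Symb) (k : ℕ) : Finset Symb :=
  ξ.AsetOf u v (ordA ξ u v k) k

/-- The set `B_k` computed with respect to an order `R`. -/
def BsetOf (ξ : NewtonPolygon) (u v : Symb) (R : Symb → Symb → Prop) (k : ℕ) : Finset Symb :=
  ξ.Tfin.filter (fun t =>
    (if k = 0 then ξ.dlt t = 1 else ξ.dlt t = ξ.dlt (ξ.beta u v k)) ∧
    R (ξ.beta u v k) t ∧ R (ξ.pmod u v t) (ξ.beta u v (k + 1)))

/-- The order `<_{a+k}` of Construction B (for `k ≥ 1`, meaningful when `B_{k-1} ≠ ∅`). -/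
def ordB (ξ : NewtonPolygon) (u v : Symb) (a : ℕ) : ℕ → Symb → Symb → Prop
  | 0 => ordA ξ u v a
  | k + 1 =>
      stepB (ordB ξ u v a k) (ξ.beta u v (k + 1))
        (ξ.pmod u v (minOf (ordB ξ u v a k) (ξ.BsetOf u v (ordB ξ u v a k) k)))

/-- The set `B_k` of Construction B. -/
def Bset (ξ : NewtonPolygon) (u v : Symb) (a k : ℕ) : Finset Symb :=
  ξ.BsetOf u v (ordB ξ u v a k) k

end NewtonPolygon

section Aux

private theorem div_add_ind' (a m h : ℕ) (hh : 0 < h) (hm : m ≤ h) :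
    (a + m) / h = a / h + (if (a + m) % h < m then 1 else 0) := by
  obtain ⟨s, hs, q, rfl⟩ : ∃ s, s < h ∧ ∃ q, a = h * q + s :=
    ⟨a % h, Nat.mod_lt _ hh, a / h, (Nat.div_add_mod a h).symm ▸ by ring⟩
  have e2 : h * q + s = s + h * q := by ring
  rw [e2, Nat.add_mul_div_left _ _ hh, Nat.div_eq_of_lt hs]
  by_cases hc : s + m < h
  · have e1 : (s + h * q + m) = (s + m) + h * q := by ring
    rw [e1, Nat.add_mul_div_left _ _ hh, Nat.add_mul_mod_self_left,
      Nat.div_eq_of_lt hc, Nat.mod_eq_of_lt hc]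
    have : ¬ (s + m < m) := by omega
    simp [this]
  · have hq : h * (q + 1) = h * q + h := by ring
    have e1 : (s + h * q + m) = (s + m - h) + h * (q + 1) := by omega
    rw [e1, Nat.add_mul_div_left _ _ hh, Nat.add_mul_mod_self_left]
    have hlt : s + m - h < h := by omega
    rw [Nat.div_eq_of_lt hlt, Nat.mod_eq_of_lt hlt]
    have : s + m - h < m := by omega
    simp [this]

private theorem div_le_div_cross' (A B h H : ℕ) (hh : 0 < h) (hH : 0 < H) (hc : A * H ≤ B * h) :
    A / h ≤ B / H := by
  rw [Nat.le_div_iff_mul_le hH]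
  have h1 : (A / h) * h ≤ A := Nat.div_mul_le_self A h
  have h2 : (A / h) * h * H ≤ B * h := le_trans (Nat.mul_le_mul_right H h1) hc
  exact Nat.le_of_mul_le_mul_right (by linarith [h2] : (A / h) * H * h ≤ B * h) hh

private theorem ceil_le_ceil_cross' (A B h H : ℕ) (hh : 0 < h) (hH : 0 < H)
    (hc : A * H ≤ B * h) : (A + h - 1) / h ≤ (B + H - 1) / H := by
  rcases Nat.eq_zero_or_pos ((A + h - 1) / h) with h0 | h1
  · simp [h0]
  obtain ⟨e, he⟩ : ∃ e, (A + h - 1) / h = e + 1 := ⟨(A + h - 1) / h - 1, by omega⟩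
  rw [he, Nat.le_div_iff_mul_le hH]
  have hdh : (e + 1) * h ≤ A + h - 1 := he ▸ Nat.div_mul_le_self _ _
  have exp1 : (e + 1) * h = e * h + h := by ring
  have hA : 1 ≤ A := by
    by_contra hA
    have hA0 : A = 0 := by omega
    rw [hA0] at he
    have : (0 + h - 1) / h = 0 := Nat.div_eq_of_lt (by omega)
    omega
  have key : e * h < A := by omega
  have key3 : (e * H) * h < B * h := by
    calc (e * H) * h = (e * h) * H := by ring
    _ < A * H := Nat.mul_lt_mul_of_lt_of_le key (le_refl H) hH
    _ ≤ B * h := hc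
  have key4 : e * H < B := Nat.lt_of_mul_lt_mul_right key3
  have exp2 : (e + 1) * H = e * H + H := by ring
  omega

private theorem tsum_le_core (F G : ℕ → ℕ) (hF0 : F 0 = 0) (hG0 : G 0 = 0)
    (hFG : ∀ k, F k ≤ G k)
    (f g : ℕ → ℝ)
    (hf : ∀ k, f k = ((F (k+1) : ℝ) - F k) / 2^(k+1))
    (hg : ∀ k, g k = ((G (k+1) : ℝ) - G k) / 2^(k+1))
    (hfs : Summable f) (hgs : Summable g) :
    ∑' k, f k ≤ ∑' k, g k := by
  have hkey : ∀ K, ((G K : ℝ) - (F K : ℝ)) ≤ (∑ k ∈ Finset.range K, (g k - f k)) * 2^K := by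
    intro K
    induction K with
    | zero => simp [hF0, hG0]
    | succ K ih =>
        rw [Finset.sum_range_succ, add_mul]
        have hne : ((2:ℝ)^(K+1)) ≠ 0 := by positivity
        have hx : (g K - f K) * 2^(K+1) = ((G (K+1):ℝ) - G K) - ((F (K+1):ℝ) - F K) := by
          rw [hf, hg, div_sub_div_same, div_mul_cancel₀ _ hne]
        have hy : (∑ k ∈ Finset.range K, (g k - f k)) * 2^(K+1)
            = ((∑ k ∈ Finset.range K, (g k - f k)) * 2^K) * 2 := by
          rw [pow_succ]; ring
        rw [hx, hy]
        have hFGK : (F K : ℝ) ≤ G K := by exact_mod_cast hFG K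
        linarith [ih]
  have hsub : Summable (fun k => g k - f k) := hgs.sub hfs
  have h0 : (0:ℝ) ≤ ∑' k, (g k - f k) := by
    refine ge_of_tendsto' hsub.hasSum.tendsto_sum_nat (fun K => ?_)
    have h2 : (0:ℝ) < 2^K := by positivity
    have hFGK : (F K : ℝ) ≤ G K := by exact_mod_cast hFG K
    nlinarith [hkey K]
  rw [Summable.tsum_sub hgs hfs] at h0
  linarith

end Aux

namespace NewtonPolygon

private theorem pinv_iter (ξ : NewtonPolygon) (r i : ℕ) (hi1 : 1 ≤ i) (hi : i ≤ ξ.h r) :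
    ∀ k : ℕ, ξ.pinv^[k] (r, i) = (r, (i - 1 + k * ξ.m r) % ξ.h r + 1) := by
  have hh : 0 < ξ.h r := lt_of_lt_of_le hi1 hi
  intro k
  induction k with
  | zero => simp [Nat.mod_eq_of_lt (by omega : i - 1 < ξ.h r)]; omega
  | succ k ih =>
      rw [Function.iterate_succ_apply', ih]
      unfold pinv
      simp only
      congr 1
      have harg : ((((i - 1 + k * ξ.m r) % ξ.h r + 1 : ℕ) : ℤ) + (ξ.m r : ℤ) - 1)
          = (((i - 1 + k * ξ.m r) % ξ.h r + ξ.m r : ℕ) : ℤ) := by push_cast; ring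
      rw [harg, ← Int.natCast_mod, Int.toNat_natCast, Nat.mod_add_mod]
      congr 2
      ring

private theorem dlt_le_one (ξ : NewtonPolygon) (t : Symb) : ξ.dlt t ≤ 1 := by
  unfold dlt; split <;> simp

private theorem summable_bexp (ξ : NewtonPolygon) (t : Symb) :
    Summable (fun k : ℕ => (ξ.dlt (ξ.pinv^[k + 1] t) : ℝ) / 2 ^ (k + 1)) := by
  have hgeo : Summable (fun k : ℕ => ((1:ℝ)/2)^(k+1)) := by
    simpa [pow_succ] using summable_geometric_two.mul_right (1/2 : ℝ)
  refine Summable.of_nonneg_of_le (fun k => by positivity) (fun k => ?_) hgeo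
  have e : ((1:ℝ)/2)^(k+1) = 1 / 2^(k+1) := by rw [div_pow, one_pow]
  rw [e]
  gcongr
  exact_mod_cast ξ.dlt_le_one _

private theorem bexp_le (ξ : NewtonPolygon) (r q i j : ℕ)
    (hi1 : 1 ≤ i) (hi : i ≤ ξ.h r) (hj1 : 1 ≤ j) (hj : j ≤ ξ.h q)
    (hF : ∀ k : ℕ, (i - 1 + k * ξ.m r) / ξ.h r ≤ (j - 1 + k * ξ.m q) / ξ.h q) :
    ξ.bexp (r, i) ≤ ξ.bexp (q, j) := by
  have hhr : 0 < ξ.h r := lt_of_lt_of_le hi1 hi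
  have hhq : 0 < ξ.h q := lt_of_lt_of_le hj1 hj
  set F : ℕ → ℕ := fun k => (i - 1 + k * ξ.m r) / ξ.h r with hFdef
  set G : ℕ → ℕ := fun k => (j - 1 + k * ξ.m q) / ξ.h q with hGdef
  have hstepF : ∀ k, F (k+1) = F k + ξ.dlt (ξ.pinv^[k+1] (r, i)) := by
    intro k
    rw [pinv_iter ξ r i hi1 hi (k+1)]
    unfold dlt
    simp only [hFdef]
    have e : i - 1 + (k+1) * ξ.m r = (i - 1 + k * ξ.m r) + ξ.m r := by ring
    rw [e, div_add_ind' _ _ _ hhr (Nat.le_add_right _ _)]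
    split_ifs <;> omega
  have hstepG : ∀ k, G (k+1) = G k + ξ.dlt (ξ.pinv^[k+1] (q, j)) := by
    intro k
    rw [pinv_iter ξ q j hj1 hj (k+1)]
    unfold dlt
    simp only [hGdef]
    have e : j - 1 + (k+1) * ξ.m q = (j - 1 + k * ξ.m q) + ξ.m q := by ring
    rw [e, div_add_ind' _ _ _ hhq (Nat.le_add_right _ _)]
    split_ifs <;> omega
  unfold bexp
  refine tsum_le_core F G ?_ ?_ hF _ _ ?_ ?_ (ξ.summable_bexp _) (ξ.summable_bexp _)
  · exact Nat.div_eq_of_lt (by omega)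
  · exact Nat.div_eq_of_lt (by omega)
  · intro k
    rw [hstepF k]
    push_cast
    ring
  · intro k
    rw [hstepG k]
    push_cast
    ring

end NewtonPolygon

/-- for a Newton polygon with all `m_r ≥ 1`, `n_r ≥ 1` and `1 ≤ r < q ≤ z`:
`(r,1) < (q,1)`, `(r,h_r) < (q,h_q)` and `(r,m_r+1) < (q,m_q+1)` in the order of `S(ξ)`. -/
theorem statement3 (ξ : NewtonPolygon) (hpos : ∀ p ∈ ξ.seg, 1 ≤ p.1 ∧ 1 ≤ p.2)
    (r q : ℕ) (hr : 1 ≤ r) (hrq : r < q) (hq : q ≤ ξ.z) :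
    ξ.slt (r, 1) (q, 1) ∧
    ξ.slt (r, ξ.h r) (q, ξ.h q) ∧
    ξ.slt (r, ξ.m r + 1) (q, ξ.m q + 1) := by
  have hrlen : r - 1 < ξ.seg.length := by unfold NewtonPolygon.z at hq; omega
  have hqlen : q - 1 < ξ.seg.length := by unfold NewtonPolygon.z at hq; omega
  have egr : ξ.seg.getD (r-1) (0,0) = ξ.seg.get ⟨r-1, hrlen⟩ := by
    simp [List.getD_eq_getElem?_getD, List.getElem?_eq_getElem hrlen]
  have egq : ξ.seg.getD (q-1) (0,0) = ξ.seg.get ⟨q-1, hqlen⟩ := by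
    simp [List.getD_eq_getElem?_getD, List.getElem?_eq_getElem hqlen]
  have hmemr : ξ.seg.get ⟨r-1, hrlen⟩ ∈ ξ.seg := List.get_mem _ _
  have hmemq : ξ.seg.get ⟨q-1, hqlen⟩ ∈ ξ.seg := List.get_mem _ _
  have hmr1 : 1 ≤ ξ.m r := by rw [NewtonPolygon.m, egr]; exact (hpos _ hmemr).1
  have hnr1 : 1 ≤ ξ.n r := by rw [NewtonPolygon.n, egr]; exact (hpos _ hmemr).2
  have hmq1 : 1 ≤ ξ.m q := by rw [NewtonPolygon.m, egq]; exact (hpos _ hmemq).1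
  have hnq1 : 1 ≤ ξ.n q := by rw [NewtonPolygon.n, egq]; exact (hpos _ hmemq).2
  have hhr : 0 < ξ.h r := by unfold NewtonPolygon.h; omega
  have hhq : 0 < ξ.h q := by unfold NewtonPolygon.h; omega
  -- cross-multiplied slope condition
  have hslope := ξ.slopes ⟨r-1, hrlen⟩ ⟨q-1, hqlen⟩ (by simp [Fin.mk_le_mk]; omega)
  rw [← egr, ← egq] at hslope
  have hslope' : (ξ.n q : ℚ) / ((ξ.m q : ℚ) + ξ.n q) ≤ (ξ.n r : ℚ) / ((ξ.m r : ℚ) + ξ.n r) := by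
    unfold NewtonPolygon.m NewtonPolygon.n
    exact hslope
  have hcrossQ : (ξ.n q : ℚ) * ((ξ.m r : ℚ) + ξ.n r) ≤ (ξ.n r : ℚ) * ((ξ.m q : ℚ) + ξ.n q) := by
    rw [div_le_div_iff₀ (by positivity) (by positivity)] at hslope'
    · linarith [hslope']
  have hcrossN : ξ.n q * (ξ.m r + ξ.n r) ≤ ξ.n r * (ξ.m q + ξ.n q) := by
    exact_mod_cast (by push_cast; linarith [hcrossQ] : ((ξ.n q * (ξ.m r + ξ.n r) : ℕ) : ℚ) ≤ ((ξ.n r * (ξ.m q + ξ.n q) : ℕ) : ℚ))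
  have hcross : ξ.m r * ξ.h q ≤ ξ.m q * ξ.h r := by
    unfold NewtonPolygon.h
    nlinarith [hcrossN]
  -- helper to turn bexp ≤ into slt
  have hslt : ∀ i j : ℕ, ξ.bexp (r, i) ≤ ξ.bexp (q, j) → ξ.slt (r, i) (q, j) := by
    intro i j hle
    rcases lt_or_eq_of_le hle with h | h
    · exact Or.inl h
    · exact Or.inr ⟨h, hrq⟩
  refine ⟨hslt _ _ ?_, hslt _ _ ?_, hslt _ _ ?_⟩
  · refine ξ.bexp_le r q 1 1 le_rfl hhr le_rfl hhq (fun k => ?_)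
    simp only [Nat.sub_self, Nat.zero_add]
    refine div_le_div_cross' _ _ _ _ hhr hhq ?_
    calc k * ξ.m r * ξ.h q = k * (ξ.m r * ξ.h q) := by ring
    _ ≤ k * (ξ.m q * ξ.h r) := Nat.mul_le_mul_left k hcross
    _ = k * ξ.m q * ξ.h r := by ring
  · refine ξ.bexp_le r q (ξ.h r) (ξ.h q) hhr le_rfl hhq le_rfl (fun k => ?_)
    have e1 : ξ.h r - 1 + k * ξ.m r = k * ξ.m r + ξ.h r - 1 := by omega
    have e2 : ξ.h q - 1 + k * ξ.m q = k * ξ.m q + ξ.h q - 1 := by omega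
    rw [e1, e2]
    refine ceil_le_ceil_cross' _ _ _ _ hhr hhq ?_
    calc k * ξ.m r * ξ.h q = k * (ξ.m r * ξ.h q) := by ring
    _ ≤ k * (ξ.m q * ξ.h r) := Nat.mul_le_mul_left k hcross
    _ = k * ξ.m q * ξ.h r := by ring
  · have hir : ξ.m r + 1 ≤ ξ.h r := by unfold NewtonPolygon.h; omega
    have hiq : ξ.m q + 1 ≤ ξ.h q := by unfold NewtonPolygon.h; omega
    refine ξ.bexp_le r q (ξ.m r + 1) (ξ.m q + 1) (by omega) hir (by omega) hiq (fun k => ?_)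
    have e1 : ξ.m r + 1 - 1 + k * ξ.m r = (k + 1) * ξ.m r := by ring_nf; omega
    have e2 : ξ.m q + 1 - 1 + k * ξ.m q = (k + 1) * ξ.m q := by ring_nf; omega
    rw [e1, e2]
    refine div_le_div_cross' _ _ _ _ hhr hhq ?_
    calc (k+1) * ξ.m r * ξ.h q = (k+1) * (ξ.m r * ξ.h q) := by ring
    _ ≤ (k+1) * (ξ.m q * ξ.h r) := Nat.mul_le_mul_left (k+1) hcross
    _ = (k+1) * ξ.m q * ξ.h r := by ring
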